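/- The $9 \times 9$ matrix $Z_{CHSH}$ with $(Z_{CHSH})_{00} = 2 + \sqrt{2}$, $(Z_{CHSH})_{0i} = (Z_{CHSH})_{i0} = -1$ for $i = 1, \ldots, 8$, $(Z_{CHSH})_{ii} = 1$, $(Z_{CHSH})_{i,i\pm 1 \bmod 8} = 2 - \sqrt{2}$ and $(Z_{CHSH})_{i, i+4 \bmod 8} = 3 - 2\sqrt{2}$ (indices $1, \ldots, 8$ taken cyclically), and all other entries $0$, is positive semidefinite. -/

import Mathlib

/-- The dual-optimal CHSH matrix `Z_CHSH`: top-left entry `2+√2`, border entries `-1`,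
and on the trailing `8×8` block (indexed by `ZMod 8`) the circulant with diagonal `1`,
value `2-√2` at offsets `±1` and `3-2√2` at offset `4`. -/
noncomputable def Zchsh : Matrix (Fin 1 ⊕ ZMod 8) (Fin 1 ⊕ ZMod 8) ℝ :=
  Matrix.fromBlocks
    (fun _ _ => 2 + Real.sqrt 2) (fun _ _ => -1) (fun _ _ => -1)
    (fun i j =>
      if i = j then 1
      else if i - j = 1 ∨ i - j = -1 then 2 - Real.sqrt 2
      else if i - j = 4 then 3 - 2 * Real.sqrt 2
      else 0)

/-!
`Z_CHSH` is a nonnegative combination of rank-one matrices `v vᵀ`. The first one,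
`(2 - √2)/2 · u uᵀ` with `u = (-(2 + √2), 1, …, 1)`, produces the top-left entry and the border,
and adds the constant `(2 - √2)/2` to the circulant block. The circulant block has eigenvalue
`1 + 2(2 - √2) cos (πk/4) + (3 - 2√2)(-1)ᵏ` at frequency `k`: this is `8 - 4√2` for `k = 0`,
exactly the contribution of that constant, `4 - 2√2` for `k = 2, 6`, `4√2 - 4` for `k = 1, 7`
and `0` otherwise. So the rest of the block is the sum of its spectral projections onto the real
Fourier modes of frequencies `1` and `2`, with nonnegative weights.
-/

open Matrix Real

theorem Matrix.posSemidef_smul_vecMulVec_self {n R : Type*} [Finite n] [CommRing R]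
    [PartialOrder R] [StarRing R] [StarOrderedRing R] [TrivialStar R]
    {w : R} (hw : 0 ≤ w) (v : n → R) : (w • vecMulVec v v).PosSemidef := by
  simpa using (posSemidef_vecMulVec_self_star v).smul hw

namespace Zchsh

noncomputable def schurVec : Fin 1 ⊕ ZMod 8 → ℝ := Sum.elim (fun _ => -(2 + √2)) 1

/- The real Fourier modes `cos (π j / 2)`, `sin (π j / 2)`, `2 cos (π j / 4)`, `2 sin (π j / 4)`
of `j : ZMod 8`. -/
def fourierCos₂ : ZMod 8 → ℝ := ![1, 0, -1, 0, 1, 0, -1, 0]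

def fourierSin₂ : ZMod 8 → ℝ := ![0, 1, 0, -1, 0, 1, 0, -1]

noncomputable def fourierCos₁ : ZMod 8 → ℝ := ![2, √2, 0, -√2, -2, -√2, 0, √2]

noncomputable def fourierSin₁ : ZMod 8 → ℝ := ![0, √2, 2, √2, 0, -√2, -2, -√2]

/-- The weights are the eigenvalues `4 - 2√2` and `4√2 - 4` divided by the squared norms
`4` and `16` of the modes. -/
theorem eq_sum_smul_vecMulVec : Zchsh =
    ((2 - √2) / 2) • vecMulVec schurVec schurVec
    + ((2 - √2) / 2) • vecMulVec (Sum.elim 0 fourierCos₂) (Sum.elim 0 fourierCos₂)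
    + ((2 - √2) / 2) • vecMulVec (Sum.elim 0 fourierSin₂) (Sum.elim 0 fourierSin₂)
    + ((√2 - 1) / 4) • vecMulVec (Sum.elim 0 fourierCos₁) (Sum.elim 0 fourierCos₁)
    + ((√2 - 1) / 4) • vecMulVec (Sum.elim 0 fourierSin₁) (Sum.elim 0 fourierSin₁) := by
  ext (i | i) (j | j) <;>
    simp only [Zchsh, fromBlocks, of_apply, Sum.elim_inl, Sum.elim_inr, schurVec,
      vecMulVec_apply, Matrix.add_apply, Matrix.smul_apply, smul_eq_mul, Pi.zero_apply,
      Pi.one_apply]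
  case inl.inl | inl.inr | inr.inl => grind
  case inr.inr =>
    fin_cases i <;> fin_cases j <;>
      simp +decide [fourierCos₂, fourierSin₂, fourierCos₁, fourierSin₁] <;> grind

end Zchsh

theorem Zchsh_posSemidef : Zchsh.PosSemidef := by
  have hsqrt_le : √2 ≤ 2 := sqrt_le_iff.mpr ⟨zero_le_two, by norm_num⟩
  have hw₂ : 0 ≤ (2 - √2) / 2 := by linarith
  have hw₁ : 0 ≤ (√2 - 1) / 4 := by linarith [one_lt_sqrt_two]
  rw [Zchsh.eq_sum_smul_vecMulVec]
  refine .add (.add (.add (.add ?_ ?_) ?_) ?_) ?_ <;>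
    exact posSemidef_smul_vecMulVec_self (by assumption) _
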